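/- arXiv:0710.0330 — 2 statements merged into one kernel-verified Lean document; each statement's English description precedes it below -/
import Mathlib

section
/- Let A be a commutative ring and L a unit of A. Every element x of the A-subalgebra 𝓡 of A[[T]] generated by the elements T^b·(T^b − L^a)^{−1} (a ∈ ℤ, b ≥ 1) admits a lim-representation: there exist polynomials P, Q ∈ A[T] such that Q is monic, the constant coefficient Q(0) is a unit of A, deg P ≤ deg Q, and x · Q = P in A[[T]]. -/
open PowerSeries

/-- The `A`-subalgebra 𝓡 of `A⟦T⟧` generated by the elements `T^b * (T^b - L^a)⁻¹`
for `a ∈ ℤ`, `b ≥ 1`. -/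
noncomputable def RatAlg (A : Type*) [CommRing A] (L : Aˣ) : Subalgebra A (PowerSeries A) :=
  Algebra.adjoin A
    {x : PowerSeries A | ∃ (a : ℤ) (b : ℕ), 1 ≤ b ∧
      x = (PowerSeries.X : PowerSeries A) ^ b *
        Ring.inverse ((PowerSeries.X : PowerSeries A) ^ b -
          PowerSeries.C ((L ^ a : Aˣ) : A))}

/-- A lim-representation of a power series `x`: polynomials `P, Q` with `Q` monic,
`Q(0)` a unit, `deg P ≤ deg Q`, and `x = P/Q`, i.e. `x * Q = P` in `A⟦T⟧`. -/
def IsLimRep {A : Type*} [CommRing A] (x : PowerSeries A) (P Q : Polynomial A) : Prop :=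
  Q.Monic ∧ IsUnit (Q.coeff 0) ∧ P.degree ≤ Q.degree ∧
    x * (Q : PowerSeries A) = (P : PowerSeries A)

/-! Power series admitting a lim-representation form an `A`-subalgebra: `P/Q + P'/Q'` and
`P/Q * P'/Q'` have denominator `QQ'`, which is again monic with unit constant term, and the degree
bound survives because `Q'` is monic. Each generator `T^b (T^b - L^a)⁻¹` is represented by
`(T^b, T^b - L^a)`. -/

open scoped Polynomial

section

variable {A : Type*} [CommRing A]

theorem IsLimRep.add {x y : A⟦X⟧} {P Q P' Q' : A[X]} (hx : IsLimRep x P Q)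
    (hy : IsLimRep y P' Q') : IsLimRep (x + y) (P * Q' + P' * Q) (Q * Q') := by
  obtain ⟨hQ, hQ0, hPQ, hxQ⟩ := hx
  obtain ⟨hQ', hQ0', hPQ', hyQ'⟩ := hy
  refine ⟨hQ.mul hQ', by rw [Polynomial.mul_coeff_zero]; exact hQ0.mul hQ0', ?_, ?_⟩
  · rw [hQ'.degree_mul]
    refine (Polynomial.degree_add_le _ _).trans (max_le ?_ ?_)
    · exact Polynomial.degree_mul_le_of_le hPQ le_rfl
    · exact (Polynomial.degree_mul_le_of_le hPQ' le_rfl).trans_eq (add_comm _ _)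
  · push_cast
    linear_combination (Q' : A⟦X⟧) * hxQ + (Q : A⟦X⟧) * hyQ'

theorem IsLimRep.mul {x y : A⟦X⟧} {P Q P' Q' : A[X]} (hx : IsLimRep x P Q)
    (hy : IsLimRep y P' Q') : IsLimRep (x * y) (P * P') (Q * Q') := by
  obtain ⟨hQ, hQ0, hPQ, hxQ⟩ := hx
  obtain ⟨hQ', hQ0', hPQ', hyQ'⟩ := hy
  refine ⟨hQ.mul hQ', by rw [Polynomial.mul_coeff_zero]; exact hQ0.mul hQ0', ?_, ?_⟩
  · rw [hQ'.degree_mul]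
    exact Polynomial.degree_mul_le_of_le hPQ hPQ'
  · push_cast
    rw [mul_mul_mul_comm, hxQ, hyQ']

theorem isLimRep_C (a : A) : IsLimRep (C a) (Polynomial.C a) 1 :=
  ⟨Polynomial.monic_one, by simp, by nontriviality A; simpa using Polynomial.degree_C_le, by simp⟩

theorem isLimRep_mul_inverse {P Q : A[X]} (hQ : Q.Monic) (hQ0 : IsUnit (Q.coeff 0))
    (hPQ : P.degree ≤ Q.degree) : IsLimRep ((P : A⟦X⟧) * Ring.inverse (Q : A⟦X⟧)) P Q := by
  have hQunit : IsUnit (Q : A⟦X⟧) := by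
    rwa [isUnit_iff_constantCoeff, Polynomial.constantCoeff_coe]
  exact ⟨hQ, hQ0, hPQ, by rw [mul_assoc, Ring.inverse_mul_cancel _ hQunit, mul_one]⟩

theorem isLimRep_X_pow_mul_inverse {b : ℕ} (hb : b ≠ 0) {u : A} (hu : IsUnit u) :
    IsLimRep (X ^ b * Ring.inverse (X ^ b - C u)) (Polynomial.X ^ b)
      (Polynomial.X ^ b - Polynomial.C u) := by
  have hdeg : (Polynomial.X ^ b : A[X]).degree ≤ (Polynomial.X ^ b - Polynomial.C u).degree := by
    nontriviality A
    rw [Polynomial.degree_X_pow, Polynomial.degree_X_pow_sub_C (Nat.pos_of_ne_zero hb)]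
  have hcoeff : (Polynomial.X ^ b - Polynomial.C u).coeff 0 = -u := by
    simp [Polynomial.coeff_X_pow, hb.symm]
  simpa using isLimRep_mul_inverse (Polynomial.monic_X_pow_sub_C u hb)
    (hcoeff ▸ hu.neg) hdeg

variable (A) in
noncomputable def limRepSubalgebra : Subalgebra A A⟦X⟧ where
  carrier := {x | ∃ P Q, IsLimRep x P Q}
  mul_mem' := fun ⟨_, _, hx⟩ ⟨_, _, hy⟩ ↦ ⟨_, _, hx.mul hy⟩
  add_mem' := fun ⟨_, _, hx⟩ ⟨_, _, hy⟩ ↦ ⟨_, _, hx.add hy⟩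
  algebraMap_mem' a := ⟨_, _, isLimRep_C a⟩

end

/-- every element of 𝓡 admits a lim-representation. -/
theorem stmt4 {A : Type*} [CommRing A] (L : Aˣ) (x : PowerSeries A)
    (hx : x ∈ RatAlg A L) :
    ∃ P Q : Polynomial A, IsLimRep x P Q := by
  refine Algebra.adjoin_le (S := limRepSubalgebra A) ?_ hx
  rintro _ ⟨a, b, hb, rfl⟩
  exact ⟨_, _, isLimRep_X_pow_mul_inverse (by omega) (L ^ a).isUnit⟩
end

section
/- Let A be a commutative ring, L a unit of A, and d ≥ 1 an integer. The A-linear truncation operator x ↦ x[d] on A[[T]] (which keeps only the coefficients in degrees divisible by d) maps the A-subalgebra 𝓡 generated by the elements T^b·(T^b − L^a)^{−1} (a ∈ ℤ, b ≥ 1) into itself: for every x ∈ 𝓡, x[d] ∈ 𝓡. -/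
open PowerSeries

/-- The truncation `x ↦ x[d]` keeping only the coefficients in degrees divisible by `d`. -/
noncomputable def truncDiv (A : Type*) [CommRing A] (d : ℕ) (x : PowerSeries A) :
    PowerSeries A :=
  PowerSeries.mk fun i => if d ∣ i then PowerSeries.coeff i x else 0

/-!
Write `G(v, B) = (1 - v T^B)⁻¹` (`geom v B`); up to unit scalars the generators of 𝓡 are the
series `T^B G(v, B)` with `v` a power of `L`. The slice of a product in degrees `≡ ρ (mod d)` is
the sum over `σ` of the products of the `σ`-slice and the `(ρ - σ)`-slice, so the series all of
whose slices lie in 𝓡 form a subalgebra, and it suffices to slice the generators. From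
`G(v, B) = ∑_{t<d} v^t T^{Bt} G(v^d, Bd)`, where `G(v^d, Bd)` only lives in degrees divisible by
`d`, every slice of `T^B G(v, B)` is a single term `v^t T^{B(t+1)} G(v^d, Bd)`. Finally
`T^e G(w, M) ∈ 𝓡` whenever `e ≤ M`: multiplying by `((1 - T) G(1, 1))^(M-1) = 1` turns it into
a combination of the `T^k G(1, 1)^(M-1) G(w, M)` with `k < 2M`, and each of these is a product
of powers of `T G(1, 1)` and `G(1, 1)` with `G(w, M)` or `T^M G(w, M)`.
-/

theorem Ring.inverse_eq_of_mul_eq_one {M : Type*} [CommMonoidWithZero M] {x y : M}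
    (h : x * y = 1) : Ring.inverse x = y := by
  simpa using (Ring.inverse_mul_eq_iff_eq_mul x 1 y (IsUnit.of_mul_eq_one y h)).mpr h.symm

namespace PowerSeries

variable {A : Type*} [CommRing A] {d : ℕ}

theorem C_mem (S : Subalgebra A A⟦X⟧) (a : A) : C a ∈ S :=
  C_eq_algebraMap (R := A) ▸ S.algebraMap_mem a

noncomputable def sliceMod (d : ℕ) (ρ : ZMod d) : A⟦X⟧ →ₗ[A] A⟦X⟧ where
  toFun f := mk fun n => if (n : ZMod d) = ρ then coeff n f else 0
  map_add' f g := by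
    ext n
    simp only [coeff_mk, map_add]
    split_ifs <;> simp
  map_smul' a f := by
    ext n
    simp only [coeff_mk, coeff_smul, RingHom.id_apply]
    split_ifs <;> simp

theorem coeff_sliceMod (ρ : ZMod d) (f : A⟦X⟧) (n : ℕ) :
    coeff n (sliceMod d ρ f) = if (n : ZMod d) = ρ then coeff n f else 0 := by
  simp only [sliceMod, LinearMap.coe_mk, AddHom.coe_mk, coeff_mk]

def IsHomogeneousMod (d : ℕ) (e : ZMod d) (f : A⟦X⟧) : Prop :=
  ∀ n : ℕ, coeff n f ≠ 0 → (n : ZMod d) = e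

theorem isHomogeneousMod_sliceMod (ρ : ZMod d) (f : A⟦X⟧) :
    IsHomogeneousMod d ρ (sliceMod d ρ f) := by
  intro n hn
  rw [coeff_sliceMod] at hn
  by_contra h
  exact hn (if_neg h)

theorem isHomogeneousMod_X_pow (k : ℕ) : IsHomogeneousMod d k (X ^ k : A⟦X⟧) := by
  intro n hn
  rw [coeff_X_pow] at hn
  by_contra h
  exact hn (if_neg fun hnk => h (congrArg _ hnk))

theorem isHomogeneousMod_C (a : A) : IsHomogeneousMod d 0 (C a) := by
  intro n hn
  rw [coeff_C] at hn
  by_contra h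
  exact hn (if_neg fun hn0 => h (by rw [hn0, Nat.cast_zero]))

theorem isHomogeneousMod_one : IsHomogeneousMod d 0 (1 : A⟦X⟧) := by
  simpa using isHomogeneousMod_C (d := d) (1 : A)

theorem IsHomogeneousMod.mul {e e' : ZMod d} {f g : A⟦X⟧} (hf : IsHomogeneousMod d e f)
    (hg : IsHomogeneousMod d e' g) : IsHomogeneousMod d (e + e') (f * g) := by
  intro n hn
  rw [coeff_mul] at hn
  obtain ⟨⟨i, j⟩, hij, hne⟩ := Finset.exists_ne_zero_of_sum_ne_zero hn
  rw [← Finset.HasAntidiagonal.mem_antidiagonal.mp hij, Nat.cast_add,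
    hf i (left_ne_zero_of_mul hne), hg j (right_ne_zero_of_mul hne)]

theorem IsHomogeneousMod.sub {e : ZMod d} {f g : A⟦X⟧} (hf : IsHomogeneousMod d e f)
    (hg : IsHomogeneousMod d e g) : IsHomogeneousMod d e (f - g) := by
  intro n hn
  by_cases hfn : coeff n f = 0
  · exact hg n fun hgn => hn (by rw [map_sub, hfn, hgn, sub_zero])
  · exact hf n hfn

theorem sliceMod_mul_of_isHomogeneousMod {e : ZMod d} {f : A⟦X⟧} (hf : IsHomogeneousMod d e f)
    (ρ : ZMod d) (g : A⟦X⟧) : sliceMod d ρ (f * g) = f * sliceMod d (ρ - e) g := by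
  ext n
  rw [coeff_sliceMod, coeff_mul, coeff_mul, Finset.ite_sum_zero, Finset.sum_congr rfl]
  rintro ⟨i, j⟩ hij
  by_cases hfi : coeff i f = 0
  · simp [hfi]
  have hres : (j : ZMod d) = ρ - e ↔ (n : ZMod d) = ρ := by
    rw [eq_sub_iff_add_eq', ← hf i hfi, ← Nat.cast_add,
      Finset.HasAntidiagonal.mem_antidiagonal.mp hij]
  simp only [coeff_sliceMod, hres, mul_ite, mul_zero]

theorem sliceMod_of_isHomogeneousMod {e : ZMod d} {f : A⟦X⟧} (hf : IsHomogeneousMod d e f)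
    (ρ : ZMod d) : sliceMod d ρ f = if ρ = e then f else 0 := by
  ext n
  rw [coeff_sliceMod, apply_ite (coeff n), map_zero]
  by_cases hfn : coeff n f = 0
  · simp [hfn]
  · rw [hf n hfn]
    by_cases h : ρ = e <;> simp [h, Ne.symm]

theorem IsHomogeneousMod.of_mul_eq_one {f g : A⟦X⟧} (hf : IsHomogeneousMod d 0 f)
    (hfg : f * g = 1) : IsHomogeneousMod d 0 g := by
  intro n hn
  by_contra hn0
  have hfslice : f * sliceMod d n g = 0 := by
    rw [← sub_zero (n : ZMod d), ← sliceMod_mul_of_isHomogeneousMod hf, hfg,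
      sliceMod_of_isHomogeneousMod isHomogeneousMod_one, if_neg hn0]
  have hslice := (IsUnit.of_mul_eq_one g hfg).mul_right_eq_zero.mp hfslice
  exact hn (by simpa [coeff_sliceMod] using congrArg (coeff n) hslice)

theorem sum_sliceMod [NeZero d] (f : A⟦X⟧) : ∑ ρ, sliceMod d ρ f = f := by
  ext n
  simp [map_sum, coeff_sliceMod]

theorem sliceMod_mul [NeZero d] (ρ : ZMod d) (f g : A⟦X⟧) :
    sliceMod d ρ (f * g) = ∑ σ, sliceMod d σ f * sliceMod d (ρ - σ) g := by
  conv_lhs => rw [← sum_sliceMod (d := d) f, Finset.sum_mul, map_sum]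
  exact Finset.sum_congr rfl fun σ _ =>
    sliceMod_mul_of_isHomogeneousMod (isHomogeneousMod_sliceMod σ f) ρ g

noncomputable def slicewiseSubalgebra (d : ℕ) [NeZero d] (S : Subalgebra A A⟦X⟧) :
    Subalgebra A A⟦X⟧ where
  carrier := {f | ∀ ρ, sliceMod d ρ f ∈ S}
  mul_mem' hf hg ρ := by
    rw [sliceMod_mul]
    exact sum_mem fun σ _ => mul_mem (hf σ) (hg _)
  add_mem' hf hg ρ := by
    rw [map_add]
    exact add_mem (hf ρ) (hg ρ)
  algebraMap_mem' a ρ := by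
    rw [← C_eq_algebraMap, sliceMod_of_isHomogeneousMod (isHomogeneousMod_C a)]
    split_ifs
    · exact C_mem S a
    · exact zero_mem S

theorem truncDiv_eq_sliceMod (f : A⟦X⟧) : truncDiv A d f = sliceMod d 0 f := by
  ext n
  simp only [truncDiv, coeff_mk, coeff_sliceMod, ZMod.natCast_eq_zero_iff]

noncomputable def geom (v : A) (B : ℕ) : A⟦X⟧ :=
  Ring.inverse (1 - C v * X ^ B)

theorem one_sub_C_mul_X_pow_mul_geom (v : A) {B : ℕ} (hB : 0 < B) :
    (1 - C v * X ^ B) * geom v B = 1 :=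
  Ring.mul_inverse_cancel _ (isUnit_iff_constantCoeff.mpr (by simp [hB.ne']))

theorem geom_eq_one_add (v : A) {B : ℕ} (hB : 0 < B) :
    geom v B = 1 + C v * (X ^ B * geom v B) := by
  linear_combination one_sub_C_mul_X_pow_mul_geom v hB

theorem geom_eq_sum (v : A) {B n : ℕ} (hB : 0 < B) (hn : n ≠ 0) :
    geom v B = ∑ t ∈ Finset.range n, C (v ^ t) * (X ^ (B * t) * geom (v ^ n) (B * n)) := by
  refine Ring.inverse_eq_of_mul_eq_one ?_
  have hsum : ∑ t ∈ Finset.range n, C (v ^ t) * (X ^ (B * t) * geom (v ^ n) (B * n))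
      = (∑ t ∈ Finset.range n, (C v * X ^ B) ^ t) * geom (v ^ n) (B * n) := by
    simp only [Finset.sum_mul, mul_pow, map_pow, pow_mul, mul_assoc]
  rw [hsum, ← mul_assoc, mul_neg_geom_sum, mul_pow, ← map_pow, ← pow_mul]
  exact one_sub_C_mul_X_pow_mul_geom _ (Nat.mul_pos hB (Nat.pos_of_ne_zero hn))

theorem inverse_X_pow_sub_C (u : Aˣ) {b : ℕ} (hb : 0 < b) :
    Ring.inverse (X ^ b - C (u : A)) = -C (↑u⁻¹ : A) * geom (↑u⁻¹ : A) b := by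
  refine Ring.inverse_eq_of_mul_eq_one ?_
  have hu : C (u : A) * C (↑u⁻¹ : A) = 1 := by rw [← map_mul, Units.mul_inv, map_one]
  linear_combination one_sub_C_mul_X_pow_mul_geom (↑u⁻¹ : A) hb + geom (↑u⁻¹ : A) b * hu

theorem isHomogeneousMod_geom (v : A) {B : ℕ} (hB : 0 < B) (hdB : d ∣ B) :
    IsHomogeneousMod d 0 (geom v B) := by
  refine IsHomogeneousMod.of_mul_eq_one (isHomogeneousMod_one.sub ?_)
    (one_sub_C_mul_X_pow_mul_geom v hB)
  simpa [(ZMod.natCast_eq_zero_iff B d).mpr hdB] using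
    (isHomogeneousMod_C v).mul (isHomogeneousMod_X_pow (d := d) B)

end PowerSeries

namespace RatAlg

variable {A : Type*} [CommRing A] (L : Aˣ) {u : Aˣ}

theorem X_pow_mul_geom_mem (hu : u ∈ Subgroup.zpowers L) {B : ℕ} (hB : 0 < B) :
    X ^ B * geom (u : A) B ∈ RatAlg A L := by
  obtain ⟨a, rfl⟩ := Subgroup.mem_zpowers_iff.mp hu
  have hgen : X ^ B * Ring.inverse (X ^ B - C (↑(L ^ a)⁻¹ : A)) ∈ RatAlg A L :=
    Algebra.subset_adjoin ⟨-a, B, hB, by rw [zpow_neg]⟩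
  rw [inverse_X_pow_sub_C _ hB, inv_inv] at hgen
  have hinv : C (↑(L ^ a)⁻¹ : A) * C (↑(L ^ a) : A) = 1 := by
    rw [← map_mul, Units.inv_mul, map_one]
  have hneg : X ^ B * geom (↑(L ^ a) : A) B
      = -C (↑(L ^ a)⁻¹ : A) * (X ^ B * (-C (↑(L ^ a) : A) * geom (↑(L ^ a) : A) B)) := by
    linear_combination -(X ^ B * geom (↑(L ^ a) : A) B) * hinv
  rw [hneg]
  exact mul_mem (neg_mem (C_mem _ _)) hgen

theorem geom_mem (hu : u ∈ Subgroup.zpowers L) {B : ℕ} (hB : 0 < B) :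
    geom (u : A) B ∈ RatAlg A L := by
  rw [geom_eq_one_add _ hB]
  exact add_mem (one_mem _) (mul_mem (C_mem _ _) (X_pow_mul_geom_mem L hu hB))

theorem X_pow_mul_geom_one_pow_mem {k n : ℕ} (hkn : k ≤ n) :
    X ^ k * geom (1 : A) 1 ^ n ∈ RatAlg A L := by
  have hXH : X * geom (1 : A) 1 ∈ RatAlg A L := by
    simpa using X_pow_mul_geom_mem L (one_mem _) one_pos
  have hH : geom (1 : A) 1 ∈ RatAlg A L := by simpa using geom_mem L (one_mem _) one_pos
  rw [← Nat.add_sub_cancel' hkn, pow_add, ← mul_assoc, ← mul_pow]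
  exact mul_mem (pow_mem hXH k) (pow_mem hH _)

theorem X_pow_mul_geom_one_pow_mul_geom_mem (hu : u ∈ Subgroup.zpowers L) {k n : ℕ}
    (hk : k ≤ 2 * n + 1) : X ^ k * geom (1 : A) 1 ^ n * geom (u : A) (n + 1) ∈ RatAlg A L := by
  rcases le_or_gt k n with hkn | hnk
  · exact mul_mem (X_pow_mul_geom_one_pow_mem L hkn) (geom_mem L hu n.succ_pos)
  · obtain ⟨j, rfl⟩ : ∃ j, k = n + 1 + j := ⟨k - (n + 1), by omega⟩
    rw [show X ^ (n + 1 + j) * geom (1 : A) 1 ^ n * geom (u : A) (n + 1)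
      = X ^ j * geom (1 : A) 1 ^ n * (X ^ (n + 1) * geom (u : A) (n + 1)) by ring]
    exact mul_mem (X_pow_mul_geom_one_pow_mem L (by omega)) (X_pow_mul_geom_mem L hu n.succ_pos)

theorem X_pow_mul_geom_mem_of_le (hu : u ∈ Subgroup.zpowers L) {e B : ℕ} (hB : 0 < B)
    (he : e ≤ B) : X ^ e * geom (u : A) B ∈ RatAlg A L := by
  obtain ⟨n, rfl⟩ : ∃ n, B = n + 1 := ⟨B - 1, by omega⟩
  have hH : (1 - X) * geom (1 : A) 1 = 1 := by
    simpa using one_sub_C_mul_X_pow_mul_geom (1 : A) one_pos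
  have hexpand : X ^ e * geom (u : A) (n + 1) = ∑ m ∈ Finset.range (n + 1),
      (-1) ^ (m + n) * (n.choose m : A⟦X⟧) *
        (X ^ (e + (n - m)) * geom (1 : A) 1 ^ n * geom (u : A) (n + 1)) := by
    calc X ^ e * geom (u : A) (n + 1)
        = ((1 - X) * geom (1 : A) 1) ^ n * (X ^ e * geom (u : A) (n + 1)) := by
          rw [hH, one_pow, one_mul]
      _ = _ := by
          rw [mul_pow, sub_pow, Finset.sum_mul, Finset.sum_mul]
          refine Finset.sum_congr rfl fun m _ => ?_
          rw [one_pow, pow_add]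
          ring
  rw [hexpand]
  refine sum_mem fun m _ => mul_mem ?_ (X_pow_mul_geom_one_pow_mul_geom_mem L hu ?_)
  · exact mul_mem (pow_mem (neg_mem (one_mem _)) _) (natCast_mem _ _)
  · omega

theorem sliceMod_X_pow_mul_geom_mem {d : ℕ} [NeZero d] (hu : u ∈ Subgroup.zpowers L) {B : ℕ}
    (hB : 0 < B) (ρ : ZMod d) : sliceMod d ρ (X ^ B * geom (u : A) B) ∈ RatAlg A L := by
  rw [geom_eq_sum _ hB (NeZero.ne d), Finset.mul_sum, map_sum]
  refine sum_mem fun t ht => ?_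
  have hB' : 0 < B * d := Nat.mul_pos hB (NeZero.pos d)
  rw [show X ^ B * (C ((u : A) ^ t) * (X ^ (B * t) * geom ((u : A) ^ d) (B * d)))
      = C ((u : A) ^ t) * (X ^ (B * (t + 1)) * geom (↑(u ^ d) : A) (B * d)) by
    rw [Units.val_pow_eq_pow_val]; ring]
  rw [sliceMod_of_isHomogeneousMod ((isHomogeneousMod_C _).mul
    ((isHomogeneousMod_X_pow _).mul (isHomogeneousMod_geom _ hB' (dvd_mul_left d B))))]
  split_ifs
  · refine mul_mem (C_mem _ _) (X_pow_mul_geom_mem_of_le L (pow_mem hu d) hB' ?_)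
    exact Nat.mul_le_mul_left B (Finset.mem_range.mp ht)
  · exact zero_mem _

end RatAlg

/-- the truncation operator `x ↦ x[d]` maps 𝓡 into itself. -/
theorem stmt6 {A : Type*} [CommRing A] (L : Aˣ) (d : ℕ) (hd : 1 ≤ d) :
    ∀ x ∈ RatAlg A L, truncDiv A d x ∈ RatAlg A L := by
  intro x hx
  have : NeZero d := ⟨by omega⟩
  rw [truncDiv_eq_sliceMod]
  refine (Algebra.adjoin_le ?_ : RatAlg A L ≤ slicewiseSubalgebra d (RatAlg A L)) hx 0
  rintro _ ⟨a, b, hb, rfl⟩ ρ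
  rw [inverse_X_pow_sub_C _ hb, mul_left_comm, neg_mul, ← smul_eq_C_mul, map_neg, map_smul]
  exact neg_mem (Subalgebra.smul_mem _
    (RatAlg.sliceMod_X_pow_mul_geom_mem L (inv_mem (Subgroup.zpow_mem_zpowers L a)) hb ρ) _)
end
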